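/- Let X be a smooth real Banach space, C₁, C₂ closed convex sets, x₁ ∈ C₁, x₂ ∈ C₂ with ‖x₁ − x₂‖ = dist(C₁, C₂) > 0. Let w⋆ be the unique element of the duality mapping at x₂ − x₁ and H = {x : w⋆(x) = w⋆((x₁+x₂)/2)}. Then dist(H, C₁) = dist(H, C₂) = ½‖x₁ − x₂‖. -/

import Mathlib

/-- The normalized duality mapping `M(x) = {x* : x*(x) = ‖x‖² = ‖x*‖²}`. -/
def dualityMap {X : Type*} [NormedAddCommGroup X] [NormedSpace ℝ X] (x : X) :
    Set (X →L[ℝ] ℝ) :=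
  {f : X →L[ℝ] ℝ | f x = ‖x‖ ^ 2 ∧ ‖x‖ ^ 2 = ‖f‖ ^ 2}

/-- Distance between two sets: `dist(A,B) = inf {‖a − b‖ : a ∈ A, b ∈ B}`. -/
noncomputable def setDist {X : Type*} [NormedAddCommGroup X] (A B : Set X) : ℝ :=
  sInf (Set.image2 (fun a b => ‖a - b‖) A B)

/-! Since `x₁, x₂` realise the distance `d = ‖x₁ - x₂‖`, the convex set `C₁ - C₂` misses the open
ball of radius `d`, and Hahn–Banach separation yields `f` with `‖f‖ ≤ 1` and `d ≤ f` on `C₁ - C₂`.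
Then `d • (-f)` lies in the duality map at `x₂ - x₁`, so it is `w⋆`, and `w⋆ (c₂ - c₁) ≥ d²` for all
`cᵢ ∈ Cᵢ`. Hence `w⋆` exceeds its values on `C₁` by at least `d²/2` on `H`, and its values on `H`
by at least `d²/2` on `C₂`; as `‖w⋆‖ = d`, both distances are at least `d/2`, attained by the
midpoint. -/

section setDist

variable {X : Type*} [NormedAddCommGroup X] {A B : Set X} {a b : X}

theorem setDist_le_norm_sub (ha : a ∈ A) (hb : b ∈ B) : setDist A B ≤ ‖a - b‖ :=
  csInf_le ⟨0, by rintro - ⟨_, -, _, -, rfl⟩; exact norm_nonneg _⟩ (Set.mem_image2_of_mem ha hb)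

theorem setDist_eq_norm_sub (ha : a ∈ A) (hb : b ∈ B)
    (h : ∀ a' ∈ A, ∀ b' ∈ B, ‖a - b‖ ≤ ‖a' - b'‖) : setDist A B = ‖a - b‖ :=
  IsLeast.csInf_eq ⟨Set.mem_image2_of_mem ha hb, by
    rintro - ⟨a', ha', b', hb', rfl⟩
    exact h a' ha' b' hb'⟩

end setDist

section dualityMap

variable {X : Type*} [NormedAddCommGroup X] [NormedSpace ℝ X] {f : X →L[ℝ] ℝ} {x : X}

theorem norm_eq_of_mem_dualityMap (hf : f ∈ dualityMap x) : ‖f‖ = ‖x‖ :=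
  (pow_left_inj₀ (norm_nonneg f) (norm_nonneg x) two_ne_zero).1 hf.2.symm

theorem smul_mem_dualityMap (hf : ‖f‖ ≤ 1) (hfx : f x = ‖x‖) : ‖x‖ • f ∈ dualityMap x := by
  refine ⟨by simp [hfx, sq], ?_⟩
  rcases eq_or_ne x 0 with rfl | hx
  · simp
  have hf1 : ‖f‖ = 1 := by
    refine le_antisymm hf (le_of_mul_le_mul_right ?_ (norm_pos_iff.2 hx))
    simpa [hfx] using le_trans (le_abs_self _) (f.le_opNorm x)
  rw [norm_smul, hf1, norm_norm, mul_one]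

theorem half_norm_le_of_mem_dualityMap (hf : f ∈ dualityMap x) {v : X}
    (hv : ‖x‖ ^ 2 / 2 ≤ f v) : ‖x‖ / 2 ≤ ‖v‖ := by
  have h := le_trans (le_abs_self _) (f.le_opNorm v)
  rw [norm_eq_of_mem_dualityMap hf] at h
  nlinarith [norm_nonneg x, norm_nonneg v]

end dualityMap

section separation

open Metric

variable {X : Type*} [NormedAddCommGroup X] [NormedSpace ℝ X]

theorem exists_norm_le_one_forall_le_apply_of_convex {t : Set X} (ht : Convex ℝ t) {r : ℝ}
    (h : ∀ b ∈ t, r ≤ ‖b‖) : ∃ f : X →L[ℝ] ℝ, ‖f‖ ≤ 1 ∧ ∀ b ∈ t, r ≤ f b := by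
  rcases le_or_gt r 0 with hr | hr
  · exact ⟨0, by simp, fun _ _ => by simpa using hr⟩
  have hdisj : Disjoint (ball (0 : X) r) t :=
    Set.disjoint_left.2 fun b hb hbt => (h b hbt).not_gt (mem_ball_zero_iff.1 hb)
  obtain ⟨f, u, hfu, hut⟩ :=
    geometric_hahn_banach_open (convex_ball 0 r) isOpen_ball ht hdisj
  have hu : 0 < u := by simpa using hfu 0 (mem_ball_self hr)
  set g := (r / u) • f
  have hg : ∀ y ∈ ball 0 r, g y < r := fun y hy => by
    simpa [g, div_mul_cancel₀ r hu.ne'] using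
      mul_lt_mul_of_pos_left (hfu y hy) (div_pos hr hu)
  refine ⟨g, le_of_not_gt fun hg1 => ?_, fun b hb => ?_⟩
  · obtain ⟨x, hx, hgx⟩ := g.exists_lt_apply_of_lt_opNorm hg1
    have hrx : r • x ∈ ball 0 r := by
      simpa [norm_smul, abs_of_pos hr] using mul_lt_of_lt_one_right hr hx
    have hplus := hg _ hrx
    have hminus := hg _ (by simpa using hrx : -(r • x) ∈ ball 0 r)
    simp only [map_neg, map_smul, smul_eq_mul] at hplus hminus
    rw [Real.norm_eq_abs, lt_abs] at hgx
    rcases hgx with hgx | hgx <;> nlinarith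
  · simpa [g, div_mul_cancel₀ r hu.ne'] using
      mul_le_mul_of_nonneg_left (hut b hb) (div_pos hr hu).le

end separation

open Pointwise in
theorem exists_mem_dualityMap_sq_norm_le_apply_sub {X : Type*} [NormedAddCommGroup X]
    [NormedSpace ℝ X] {C₁ C₂ : Set X} (hconv₁ : Convex ℝ C₁) (hconv₂ : Convex ℝ C₂)
    {x₁ x₂ : X} (hx₁ : x₁ ∈ C₁) (hx₂ : x₂ ∈ C₂)
    (hnear : ∀ c₁ ∈ C₁, ∀ c₂ ∈ C₂, ‖x₁ - x₂‖ ≤ ‖c₁ - c₂‖) :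
    ∃ g ∈ dualityMap (x₂ - x₁), ∀ c₁ ∈ C₁, ∀ c₂ ∈ C₂, ‖x₂ - x₁‖ ^ 2 ≤ g (c₂ - c₁) := by
  obtain ⟨f, hf1, hf⟩ := exists_norm_le_one_forall_le_apply_of_convex (hconv₁.sub hconv₂)
    (r := ‖x₁ - x₂‖) (by rintro - ⟨c₁, hc₁, c₂, hc₂, rfl⟩; exact hnear c₁ hc₁ c₂ hc₂)
  have hf_sub : ∀ c₁ ∈ C₁, ∀ c₂ ∈ C₂, ‖x₂ - x₁‖ ≤ (-f) (c₂ - c₁) := fun c₁ hc₁ c₂ hc₂ => by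
    simpa [norm_sub_rev] using hf _ (Set.sub_mem_sub hc₁ hc₂)
  have hfx : (-f) (x₂ - x₁) = ‖x₂ - x₁‖ := by
    refine le_antisymm ?_ (hf_sub x₁ hx₁ x₂ hx₂)
    calc (-f) (x₂ - x₁) ≤ ‖-f‖ * ‖x₂ - x₁‖ := (le_abs_self _).trans ((-f).le_opNorm _)
      _ ≤ ‖x₂ - x₁‖ := mul_le_of_le_one_left (norm_nonneg _) (by rwa [norm_neg])
  refine ⟨_, smul_mem_dualityMap (by simpa using hf1) hfx, fun c₁ hc₁ c₂ hc₂ => ?_⟩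
  rw [smul_apply, smul_eq_mul, sq]
  exact mul_le_mul_of_nonneg_left (hf_sub c₁ hc₁ c₂ hc₂) (norm_nonneg _)

theorem halfway_hyperplane_of_nearest_points_general
    {X : Type*} [NormedAddCommGroup X] [NormedSpace ℝ X]
    (C₁ C₂ : Set X)
    (hconv₁ : Convex ℝ C₁) (hconv₂ : Convex ℝ C₂)
    (x₁ : X) (x₂ : X) (hx₁ : x₁ ∈ C₁) (hx₂ : x₂ ∈ C₂)
    (hdist : ‖x₁ - x₂‖ = setDist C₁ C₂)
    (ws : X →L[ℝ] ℝ) (hws : dualityMap (x₂ - x₁) = {ws}) :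
    setDist {x : X | ws x = ws ((1 / 2 : ℝ) • (x₁ + x₂))} C₁ = ‖x₁ - x₂‖ / 2 ∧
    setDist {x : X | ws x = ws ((1 / 2 : ℝ) • (x₁ + x₂))} C₂ = ‖x₁ - x₂‖ / 2 := by
  obtain ⟨g, hg, hgap⟩ := exists_mem_dualityMap_sq_norm_le_apply_sub hconv₁ hconv₂ hx₁ hx₂
    fun c₁ hc₁ c₂ hc₂ => hdist ▸ setDist_le_norm_sub hc₁ hc₂
  obtain rfl : g = ws := by rwa [hws] at hg
  set m := (1 / 2 : ℝ) • (x₁ + x₂)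
  have hm : m ∈ {x : X | g x = g m} := rfl
  have hgm : g m = (g x₁ + g x₂) / 2 := by simp only [m, map_smul, map_add, smul_eq_mul]; ring
  have hgx : g x₂ - g x₁ = ‖x₂ - x₁‖ ^ 2 := by rw [← map_sub]; exact hg.1
  have hm₁ : ‖m - x₁‖ = ‖x₁ - x₂‖ / 2 := by
    rw [show m - x₁ = (1 / 2 : ℝ) • (x₂ - x₁) by module, norm_smul, norm_sub_rev]; norm_num; ring
  have hm₂ : ‖m - x₂‖ = ‖x₁ - x₂‖ / 2 := by
    rw [show m - x₂ = (1 / 2 : ℝ) • (x₁ - x₂) by module, norm_smul]; norm_num; ring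
  refine ⟨hm₁ ▸ setDist_eq_norm_sub hm hx₁ fun a ha b hb => ?_,
    hm₂ ▸ setDist_eq_norm_sub hm hx₂ fun a ha b hb => ?_⟩
  · rw [hm₁, norm_sub_rev x₁]
    refine half_norm_le_of_mem_dualityMap hg ?_
    have := hgap b hb x₂ hx₂
    replace ha : g a = g m := ha
    simp only [map_sub] at this ⊢
    linarith
  · rw [hm₂, norm_sub_rev x₁, norm_sub_rev a]
    refine half_norm_le_of_mem_dualityMap hg ?_
    have := hgap x₁ hx₁ b hb
    replace ha : g a = g m := ha
    simp only [map_sub] at this ⊢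
    linarith

theorem halfway_hyperplane_of_nearest_points
    {X : Type*} [NormedAddCommGroup X] [NormedSpace ℝ X] [CompleteSpace X]
    (hsmooth : ∀ y : X, y ≠ 0 → (dualityMap y).Subsingleton)
    (C₁ C₂ : Set X) (hC₁ : IsClosed C₁) (hC₂ : IsClosed C₂)
    (hconv₁ : Convex ℝ C₁) (hconv₂ : Convex ℝ C₂)
    (x₁ : X) (x₂ : X) (hx₁ : x₁ ∈ C₁) (hx₂ : x₂ ∈ C₂)
    (hdist : ‖x₁ - x₂‖ = setDist C₁ C₂) (hpos : 0 < setDist C₁ C₂)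
    (ws : X →L[ℝ] ℝ) (hws : dualityMap (x₂ - x₁) = {ws}) :
    setDist {x : X | ws x = ws ((1 / 2 : ℝ) • (x₁ + x₂))} C₁ = ‖x₁ - x₂‖ / 2 ∧
    setDist {x : X | ws x = ws ((1 / 2 : ℝ) • (x₁ + x₂))} C₂ = ‖x₁ - x₂‖ / 2 :=
  halfway_hyperplane_of_nearest_points_general C₁ C₂ hconv₁ hconv₂ x₁ x₂ hx₁ hx₂ hdist ws hws
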